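/- Let K be a field, n ≥ 3, and let σ ∈ GL_n(K) have irreducible characteristic polynomial. Then there do NOT exist ρ, τ ∈ GL_n(K) such that t_{12}(1) = (ρ⁻¹σρ)·(τ⁻¹σ⁻¹τ). Equivalently, if t_{12}(1) is a product of a GL_n(K)-conjugate of σ and a GL_n(K)-conjugate of σ⁻¹, then the characteristic polynomial of σ is reducible. -/

import Mathlib

/-!
Put `C = τ⁻¹στ`. Then `t₁₂(1) C`, which is `C` with its second row `r` added to its first, is
conjugate to `σ`, so it has the same characteristic polynomial as `C`. Expanding along the first
row, this rank-one change subtracts `r · adj(X - C) e₁` from `χ_C`; since the coefficients of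
`adj(X - C)` span all polynomials in `C`, we get `r p(C) e₁ = 0` for every `p`. As `χ_C` is
irreducible, every nonzero row vector is cyclic for `C`, hence `r = 0`, contradicting the
invertibility of `C`.
-/

open Matrix Polynomial

namespace Matrix

variable {n : Type*} [Fintype n] [DecidableEq n]

section CommRing

variable {R : Type*} [CommRing R]

theorem transvection_mul_eq_updateRow (i j : n) (c : R) (M : Matrix n n R) :
    transvection i j c * M = M.updateRow i (M i + c • M j) := by
  ext a b
  by_cases ha : a = i
  · subst ha
    simp
  · simp [ha]

theorem det_updateRow_eq_vecMul_adjugate (A : Matrix n n R) (i : n) (w : n → R) :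
    (A.updateRow i w).det = (w ᵥ* adjugate A) i := by
  rw [← cramer_transpose_apply, cramer_eq_adjugate_mulVec, ← adjugate_transpose, mulVec_transpose]

theorem charpoly_updateRow_add (M : Matrix n n R) (i : n) (v : n → R) :
    (M.updateRow i (M i + v)).charpoly =
      M.charpoly - ((Polynomial.C ∘ v) ᵥ* adjugate (charmatrix M)) i := by
  have hcharmatrix : charmatrix (M.updateRow i (M i + v)) =
      (charmatrix M).updateRow i (charmatrix M i + -(Polynomial.C ∘ v)) := by
    refine Matrix.ext fun a b => ?_
    by_cases ha : a = i
    · subst ha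
      simp only [charmatrix_apply, updateRow_self, Pi.add_apply, Pi.neg_apply,
        Function.comp_apply, map_add]
      ring
    · simp [charmatrix_apply, ha]
  rw [charpoly, hcharmatrix, det_updateRow_add, updateRow_eq_self,
    det_updateRow_eq_vecMul_adjugate, neg_vecMul, Pi.neg_apply, ← sub_eq_add_neg, charpoly]

theorem matPolyEquiv_adjugate_charmatrix_mul (M : Matrix n n R) :
    matPolyEquiv (adjugate (charmatrix M)) * (X - Polynomial.C M) =
      M.charpoly.map (algebraMap R (Matrix n n R)) := by
  have h : M.charpoly • (1 : Matrix n n R[X]) = adjugate (charmatrix M) * charmatrix M :=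
    (adjugate_mul _).symm
  apply_fun matPolyEquiv at h
  simpa only [map_mul, matPolyEquiv_charmatrix, matPolyEquiv_smul_one] using h.symm

theorem aeval_mem_span_coeff_adjugate_charmatrix (M : Matrix n n R) (p : R[X]) :
    aeval M p ∈ Submodule.span R (Set.range (matPolyEquiv (adjugate (charmatrix M))).coeff) := by
  set Q := matPolyEquiv (adjugate (charmatrix M))
  set W := Submodule.span R (Set.range Q.coeff)
  have hQ := matPolyEquiv_adjugate_charmatrix_mul M
  have one_mem : (1 : Matrix n n R) ∈ W := by
    have : Q.leadingCoeff = 1 := by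
      rw [← leadingCoeff_mul_monic (monic_X_sub_C M), hQ]
      exact (M.charpoly_monic.map _).leadingCoeff
    exact this ▸ Submodule.subset_span ⟨_, rfl⟩
  have coeff_mul_X_mem (k : ℕ) : (Q * X).coeff k ∈ W := by
    cases k with
    | zero => simp
    | succ k => exact coeff_mul_X Q k ▸ Submodule.subset_span ⟨k, rfl⟩
  -- The coefficients of `Q * (X - C M) = χ_M` show that `W` is stable under right
  -- multiplication by `M`.
  have mul_mem {N : Matrix n n R} (hN : N ∈ W) : N * M ∈ W := by
    refine Submodule.span_induction (p := fun N _ => N * M ∈ W) ?_ (by simp)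
      (fun _ _ _ _ h₁ h₂ => Matrix.add_mul _ _ M ▸ W.add_mem h₁ h₂)
      (fun c _ _ h => Matrix.smul_mul c _ M ▸ W.smul_mem c h) hN
    rintro _ ⟨k, rfl⟩
    have hk := congrArg (coeff · k) hQ
    simp only [mul_sub, coeff_sub, coeff_mul_C, coeff_map, Algebra.algebraMap_eq_smul_one] at hk
    have hcoeff : Q.coeff k * M = (Q * X).coeff k - M.charpoly.coeff k • 1 := by
      rw [← hk]; abel
    exact hcoeff ▸ W.sub_mem (coeff_mul_X_mem k) (W.smul_mem _ one_mem)
  have pow_mem (j : ℕ) : M ^ j ∈ W := by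
    induction j with
    | zero => simpa using one_mem
    | succ j ih => exact pow_succ M j ▸ mul_mem ih
  rw [aeval_eq_sum_range]
  exact W.sum_mem fun j _ => W.smul_mem _ (pow_mem j)

theorem charpoly_nonsing_inv_mul_mul {P : Matrix n n R} (hP : IsUnit P.det) (M : Matrix n n R) :
    (P⁻¹ * M * P).charpoly = M.charpoly := by
  rw [charpoly_mul_comm, ← Matrix.mul_assoc, mul_nonsing_inv _ hP, Matrix.one_mul]

theorem eq_zero_of_isCoprime_of_vecMul_aeval_eq_zero (M : Matrix n n R) {p q : R[X]}
    (hpq : IsCoprime p q) {v : n → R} (hp : v ᵥ* aeval M p = 0) (hq : v ᵥ* aeval M q = 0) :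
    v = 0 := by
  obtain ⟨a, b, hab⟩ := hpq
  calc v = v ᵥ* aeval M (p * a + q * b) := by rw [mul_comm p, mul_comm q, hab, map_one, vecMul_one]
    _ = 0 := by
      rw [map_add, map_mul, map_mul, vecMul_add, ← vecMul_vecMul, ← vecMul_vecMul, hp, hq,
        zero_vecMul, zero_vecMul, add_zero]

end CommRing

section Field

variable {K : Type*} [Field K]

theorem surjective_vecMul_aeval_of_irreducible_charpoly (M : Matrix n n K)
    (hM : Irreducible M.charpoly) {v : n → K} (hv : v ≠ 0) :
    Function.Surjective fun p : K[X] => v ᵥ* aeval M p := by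
  let φ := vecMulBilin K K v ∘ₗ (aeval M).toLinearMap ∘ₗ (degreeLT K (Fintype.card n)).subtype
  -- A nonzero `p` of degree `< deg χ_M` is coprime to the irreducible `χ_M`, and `χ_M(M) = 0`.
  have hinj : Function.Injective φ := by
    rw [← LinearMap.ker_eq_bot, LinearMap.ker_eq_bot']
    rintro ⟨p, hp⟩ hφ
    by_contra hp0
    have hndvd : ¬ M.charpoly ∣ p := fun hdvd =>
      (degree_le_of_dvd hdvd (by simpa using hp0)).not_gt
        (charpoly_degree_eq_dim M ▸ mem_degreeLT.1 hp)
    exact hv <| eq_zero_of_isCoprime_of_vecMul_aeval_eq_zero M (hM.coprime_iff_not_dvd.2 hndvd)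
      (by rw [aeval_self_charpoly, vecMul_zero]) hφ
  have : FiniteDimensional K (degreeLT K (Fintype.card n)) :=
    (degreeLTEquiv K _).symm.finiteDimensional
  have hsurj : Function.Surjective φ :=
    (LinearMap.injective_iff_surjective_of_finrank_eq_finrank (by
      rw [(degreeLTEquiv K _).finrank_eq, Module.finrank_fin_fun,
        Module.finrank_fintype_fun_eq_card])).1 hinj
  intro w
  obtain ⟨⟨p, _⟩, hp⟩ := hsurj w
  exact ⟨p, hp⟩

theorem eq_zero_of_charpoly_updateRow_add_eq (M : Matrix n n K) (hM : Irreducible M.charpoly)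
    {i : n} {v : n → K} (h : (M.updateRow i (M i + v)).charpoly = M.charpoly) : v = 0 := by
  set Q := matPolyEquiv (adjugate (charmatrix M))
  have hQ (k : ℕ) : (v ᵥ* Q.coeff k) i = 0 := by
    rw [charpoly_updateRow_add, sub_eq_self] at h
    simpa [vecMul, dotProduct, finsetSum_coeff, coeff_C_mul, Q, matPolyEquiv_coeff_apply]
      using congrArg (coeff · k) h
  have haeval (p : K[X]) : (v ᵥ* aeval M p) i = 0 := by
    have hle : Submodule.span K (Set.range Q.coeff) ≤
        LinearMap.ker (LinearMap.proj i ∘ₗ vecMulBilin K K v) :=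
      Submodule.span_le.2 (by rintro _ ⟨k, rfl⟩; exact hQ k)
    exact hle (aeval_mem_span_coeff_adjugate_charmatrix M p)
  by_contra hv
  obtain ⟨p, hp⟩ := surjective_vecMul_aeval_of_irreducible_charpoly M hM hv (Pi.single i 1)
  simpa [hp] using haeval p

end Field

end Matrix

theorem stmt4 {n : ℕ} (hn : 3 ≤ n) {K : Type*} [Field K]
    (σ : Matrix (Fin n) (Fin n) K) (hσ : IsUnit σ.det)
    (hirr : Irreducible σ.charpoly) :
    ¬ ∃ ρ τ : Matrix (Fin n) (Fin n) K, IsUnit ρ.det ∧ IsUnit τ.det ∧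
      Matrix.transvection (⟨0, by omega⟩ : Fin n) (⟨1, by omega⟩ : Fin n) (1 : K)
        = (ρ⁻¹ * σ * ρ) * (τ⁻¹ * σ⁻¹ * τ) := by
  rintro ⟨ρ, τ, hρ, hτ, h⟩
  set C := τ⁻¹ * σ * τ
  have hCσ : C.charpoly = σ.charpoly := charpoly_nonsing_inv_mul_mul hτ σ
  have hdetC : IsUnit C.det := by
    simpa only [C, det_mul] using ((isUnit_nonsing_inv_det τ hτ).mul hσ).mul hτ
  have hinv : τ⁻¹ * σ⁻¹ * τ * C = 1 := by
    simp only [C, Matrix.mul_assoc, mul_nonsing_inv_cancel_left _ _ hτ,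
      nonsing_inv_mul_cancel_left _ _ hσ, nonsing_inv_mul _ hτ]
  have htC : transvection (⟨0, by omega⟩ : Fin n) ⟨1, by omega⟩ (1 : K) * C = ρ⁻¹ * σ * ρ := by
    rw [h, Matrix.mul_assoc, hinv, Matrix.mul_one]
  rw [transvection_mul_eq_updateRow, one_smul] at htC
  have hrow : C ⟨1, by omega⟩ = 0 :=
    eq_zero_of_charpoly_updateRow_add_eq C (hCσ ▸ hirr)
      (by rw [htC, charpoly_nonsing_inv_mul_mul hρ, hCσ])
  exact hdetC.ne_zero (det_eq_zero_of_row_eq_zero _ (congrFun hrow))
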